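/- Let L ≥ 1, let b : ℤ → ℝ be L-periodic with period sum C = ∑_{i=0}^{L-1} b(i), and let E : ℤ → ℝ. Suppose there exists i∞ ∈ ℤ with E(i) = b(i) for all i ≥ i∞ (eventual stillness), and suppose W_E(n) = C for every n ≥ j₂. Then E(i) = b(i) for every i ≥ j₂; that is, any deviation of E from the baseline (motion) has ended no later than spoke index j₂ − 1. -/

import Mathlib

/-!
Sliding the window one step changes its sum by `E (n + L) - E n`, so a window sum that is constant
from `j₂` on forces `E (n + L) = E n` for all `n ≥ j₂`. The baseline is `L`-periodic too, so for
`i ≥ j₂` we may shift by a multiple of `L` into the region where `E` and `b` agree.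
-/

/-- Window-summed spoke energy: `W L E n = ∑_{i=0}^{L-1} E (n+i)`. -/
def windowSum (L : ℕ) (E : ℤ → ℝ) (n : ℤ) : ℝ :=
  ∑ i ∈ Finset.range L, E (n + i)

theorem windowSum_succ (L : ℕ) (E : ℤ → ℝ) (n : ℤ) :
    windowSum L E (n + 1) + E n = windowSum L E n + E (n + L) := by
  have h := Finset.sum_range_succ' (fun i : ℕ => E (n + i)) L
  rw [Finset.sum_range_succ] at h
  simp only [windowSum, Nat.cast_add, Nat.cast_one, Nat.cast_zero, add_zero, ← add_assoc,
    add_right_comm n _ 1] at h ⊢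
  exact h.symm

theorem apply_add_eq_of_windowSum_succ_eq {L : ℕ} {E : ℤ → ℝ} {n : ℤ}
    (h : windowSum L E (n + 1) = windowSum L E n) : E (n + L) = E n := by
  linarith [windowSum_succ L E n]

theorem apply_add_mul_eq_of_periodic_from {α : Type*} {f : ℤ → α} {p j : ℤ} (hp : 0 ≤ p)
    (hf : ∀ n, j ≤ n → f (n + p) = f n) (k : ℕ) {n : ℤ} (hn : j ≤ n) :
    f (n + k * p) = f n := by
  induction k with
  | zero => simp
  | succ k ih =>
    have hjk : j ≤ n + k * p := le_add_of_le_of_nonneg hn (by positivity)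
    rw [Nat.cast_succ, add_one_mul, ← add_assoc, hf _ hjk, ih]

theorem eq_of_periodic_from_of_eventually_eq {α : Type*} {f g : ℤ → α} {p j m : ℤ} (hp : 0 < p)
    (hf : ∀ n, j ≤ n → f (n + p) = f n) (hg : ∀ n, j ≤ n → g (n + p) = g n)
    (hfg : ∀ n, m ≤ n → f n = g n) {n : ℤ} (hn : j ≤ n) : f n = g n := by
  set k := (m - n).toNat
  have hm : m ≤ n + k * p := by
    have : (m - n : ℤ) ≤ k := Int.self_le_toNat _
    nlinarith [(Nat.cast_nonneg k : (0 : ℤ) ≤ k)]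
  rw [← apply_add_mul_eq_of_periodic_from hp.le hf k hn,
    ← apply_add_mul_eq_of_periodic_from hp.le hg k hn, hfg _ hm]

theorem motion_ends_no_later_general
    (L : ℕ) (hL : 1 ≤ L)
    (b : ℤ → ℝ) (hb : ∀ i : ℤ, b (i + L) = b i)
    (C : ℝ)
    (E : ℤ → ℝ)
    (iend : ℤ) (hstill : ∀ i : ℤ, iend ≤ i → E i = b i)
    (j₂ : ℤ) (hW : ∀ n : ℤ, j₂ ≤ n → windowSum L E n = C) :
    ∀ i : ℤ, j₂ ≤ i → E i = b i := by
  have hE : ∀ n, j₂ ≤ n → E (n + L) = E n := fun n hn =>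
    apply_add_eq_of_windowSum_succ_eq ((hW (n + 1) (by omega)).trans (hW n hn).symm)
  exact fun i hi =>
    eq_of_periodic_from_of_eventually_eq (by omega) hE (fun n _ => hb n) hstill hi

/-- if the subject is eventually still and the window-summed spoke
energy equals the baseline value `C` for all window indices `n ≥ j₂`, then the
spoke energy equals the baseline for all spoke indices `i ≥ j₂`;
i.e., motion has ended no later than spoke index `j₂ - 1`. -/
theorem motion_ends_no_later
    (L : ℕ) (hL : 1 ≤ L)
    (b : ℤ → ℝ) (hb : ∀ i : ℤ, b (i + L) = b i)
    (C : ℝ) (hC : C = ∑ i ∈ Finset.range L, b i)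
    (E : ℤ → ℝ)
    (iend : ℤ) (hstill : ∀ i : ℤ, iend ≤ i → E i = b i)
    (j₂ : ℤ) (hW : ∀ n : ℤ, j₂ ≤ n → windowSum L E n = C) :
    ∀ i : ℤ, j₂ ≤ i → E i = b i :=
  motion_ends_no_later_general L hL b hb C E iend hstill j₂ hW
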